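/- Let H be a self-adjoint operator on a finite-dimensional Hilbert space with unique ground state ψ₀ of energy 0 and spectral gap γ > 0, and let A be self-adjoint with ⟨ψ₀, A ψ₀⟩ = 0. Then ‖(A)_α ψ₀‖ ≤ ‖[H, A]‖ γ^{-1} e^{−γ²/(4α)}, where (A)_α = √(α/π) ∫ e^{itH} A e^{-itH} e^{-αt²} dt. -/

import Mathlib

/-!
Since `H ψ₀ = 0`, applying the smeared operator to `ψ₀` gives the Gaussian average of
`e^{itH}` applied to `v = A ψ₀`. In an eigenbasis of `H` this average multiplies the component
of `v` along an eigenvalue `μ` by the Fourier transform of the Gaussian, `e^{-μ²/(4α)}`.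
As `v ⊥ ψ₀` and `ψ₀` spans the kernel of `H`, the gap forces every component of `v` to have
`μ ≥ γ`. Hence the average has norm at most `e^{-γ²/(4α)} ‖v‖`, and
`γ ‖v‖ ≤ ‖H v‖ = ‖[H, A] ψ₀‖ ≤ ‖[H, A]‖`.
-/

open MeasureTheory Complex
open scoped InnerProductSpace

lemma NormedSpace.exp_apply_of_apply_eq_smul {E : Type*} [NormedAddCommGroup E]
    [NormedSpace ℂ E] [CompleteSpace E] {B : E →L[ℂ] E} {v : E} {c : ℂ} (hv : B v = c • v) :
    NormedSpace.exp B v = cexp c • v := by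
  have hpow (n : ℕ) : (B ^ n) v = c ^ n • v := by
    induction n with
    | zero => simp
    | succ k ih => rw [pow_succ, mul_apply_eq_comp, hv, map_smul, ih, smul_smul, ← pow_succ']
  have hB := (exp_series_hasSum_exp' (𝕂 := ℂ) B).mapL (ContinuousLinearMap.apply ℂ E v)
  have hc := (exp_series_hasSum_exp' (𝕂 := ℂ) c).smul_const v
  simp only [ContinuousLinearMap.apply_apply, smul_apply, hpow, smul_smul] at hB
  rw [Complex.exp_eq_exp_ℂ]
  exact hB.unique (by simpa only [smul_eq_mul] using hc)

section CStarAlgebra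

variable {𝔸 : Type*} [CStarAlgebra 𝔸] {H : 𝔸}

lemma exp_smul_mem_unitary (hH : IsSelfAdjoint H) {z : ℂ} (hz : z ∈ skewAdjoint ℂ) :
    NormedSpace.exp (z • H) ∈ unitary 𝔸 :=
  -- the general theory of `NormedSpace.exp` is stated for `ℚ`-algebras
  let : NormedAlgebra ℚ 𝔸 := .restrictScalars ℚ ℂ 𝔸
  NormedSpace.exp_mem_unitary_of_mem_skewAdjoint (hH.smul_mem_skewAdjoint hz)

lemma I_mul_ofReal_mem_skewAdjoint (t : ℝ) : I * t ∈ skewAdjoint ℂ := by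
  simp [skewAdjoint.mem_iff]

lemma integrable_gaussian_smul_conj_exp (hH : IsSelfAdjoint H) (A : 𝔸) {α : ℝ} (hα : 0 < α) :
    Integrable fun t : ℝ => Real.exp (-(α * t ^ 2)) •
      (NormedSpace.exp ((I * t) • H) * A * NormedSpace.exp ((-(I * t)) • H)) := by
  let : NormedAlgebra ℚ 𝔸 := .restrictScalars ℚ ℂ 𝔸
  refine ((integrable_exp_neg_mul_sq hα).mul_const ‖A‖).mono'
    (Continuous.aestronglyMeasurable (by fun_prop)) (.of_forall fun t => ?_)
  have hU := exp_smul_mem_unitary hH (I_mul_ofReal_mem_skewAdjoint t)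
  have hV := exp_smul_mem_unitary hH (neg_mem (I_mul_ofReal_mem_skewAdjoint t))
  rw [norm_smul, CStarRing.norm_mul_mem_unitary _ hV, CStarRing.norm_mem_unitary_mul _ hU,
    Real.norm_of_nonneg (Real.exp_pos _).le, neg_mul]

end CStarAlgebra

lemma sqrt_div_pi_mul_integral_gaussian_mul_cexp {α : ℝ} (hα : 0 < α) (μ : ℝ) :
    (√(α / Real.pi) : ℂ) * ∫ t : ℝ, (Real.exp (-(α * t ^ 2)) : ℂ) * cexp (I * t * μ) =
      Real.exp (-(μ ^ 2 / (4 * α))) := by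
  have hgauss := fourierIntegral_gaussian (b := α) (by simpa using hα) μ
  have hsqrt : ((Real.pi : ℂ) / α) ^ (1 / 2 : ℂ) = (√(Real.pi / α) : ℝ) := by
    rw [Real.sqrt_eq_rpow, Complex.ofReal_cpow (by positivity)]
    push_cast
    rfl
  have hinv : (√(α / Real.pi) : ℂ) * (√(Real.pi / α) : ℝ) = 1 := by
    rw [← Complex.ofReal_mul, ← Real.sqrt_mul (by positivity),
      div_mul_div_cancel₀ Real.pi_ne_zero, div_self hα.ne', Real.sqrt_one, Complex.ofReal_one]
  have hintegrand (t : ℝ) : (Real.exp (-(α * t ^ 2)) : ℂ) * cexp (I * t * μ) =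
      cexp (I * μ * t) * cexp (-α * t ^ 2) := by
    push_cast
    ring_nf
  simp_rw [hintegrand, hgauss, hsqrt, ← mul_assoc, hinv, one_mul]
  push_cast
  ring_nf

namespace OrthonormalBasis

variable {E ι : Type*} [NormedAddCommGroup E] [InnerProductSpace ℂ E] [Fintype ι]
  (b : OrthonormalBasis ι ℂ E)

lemma apply_eq_sum_of_apply_eq_smul {T : E →L[ℂ] E} {a : ι → ℂ}
    (hT : ∀ i, T (b i) = a i • b i) (v : E) : T v = ∑ i, (a i * ⟪b i, v⟫_ℂ) • b i := by
  conv_lhs => rw [← b.sum_repr' v]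
  simp only [map_sum, map_smul, hT, smul_smul, mul_comm]

lemma norm_sum_mul_inner_smul_sq (a : ι → ℂ) (v : E) :
    ‖∑ i, (a i * ⟪b i, v⟫_ℂ) • b i‖ ^ 2 = ∑ i, ‖a i‖ ^ 2 * ‖⟪b i, v⟫_ℂ‖ ^ 2 := by
  rw [← b.sum_sq_norm_inner_right]
  refine Finset.sum_congr rfl fun i _ => ?_
  rw [b.orthonormal.inner_right_fintype, norm_mul, mul_pow]

lemma norm_sum_mul_inner_smul_le {a : ι → ℂ} {v : E} {r : ℝ} (hr : 0 ≤ r)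
    (ha : ∀ i, ⟪b i, v⟫_ℂ ≠ 0 → ‖a i‖ ≤ r) :
    ‖∑ i, (a i * ⟪b i, v⟫_ℂ) • b i‖ ≤ r * ‖v‖ := by
  refine (pow_le_pow_iff_left₀ (norm_nonneg _) (by positivity) two_ne_zero).mp ?_
  rw [b.norm_sum_mul_inner_smul_sq, mul_pow, ← b.sum_sq_norm_inner_right, Finset.mul_sum]
  refine Finset.sum_le_sum fun i _ => ?_
  by_cases hi : ⟪b i, v⟫_ℂ = 0
  · simp [hi]
  · gcongr
    exact ha i hi

lemma le_norm_sum_mul_inner_smul {a : ι → ℂ} {v : E} {r : ℝ} (hr : 0 ≤ r)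
    (ha : ∀ i, ⟪b i, v⟫_ℂ ≠ 0 → r ≤ ‖a i‖) :
    r * ‖v‖ ≤ ‖∑ i, (a i * ⟪b i, v⟫_ℂ) • b i‖ := by
  refine (pow_le_pow_iff_left₀ (by positivity) (norm_nonneg _) two_ne_zero).mp ?_
  rw [b.norm_sum_mul_inner_smul_sq, mul_pow, ← b.sum_sq_norm_inner_right, Finset.mul_sum]
  refine Finset.sum_le_sum fun i _ => ?_
  by_cases hi : ⟪b i, v⟫_ℂ = 0
  · simp [hi]
  · gcongr
    exact ha i hi

lemma exp_smul_apply_of_apply_eq_smul [CompleteSpace E] {H : E →L[ℂ] E} {μ : ι → ℂ}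
    (hb : ∀ i, H (b i) = μ i • b i) (z : ℂ) (v : E) :
    NormedSpace.exp (z • H) v = ∑ i, (cexp (z * μ i) * ⟪b i, v⟫_ℂ) • b i :=
  b.apply_eq_sum_of_apply_eq_smul (fun i => NormedSpace.exp_apply_of_apply_eq_smul <| by
    rw [smul_apply, hb, smul_smul]) v

variable {H : E →L[ℂ] E} {μ : ι → ℝ} (hb : ∀ i, H (b i) = (μ i : ℂ) • b i)
include hb

lemma gaussian_average_exp_apply [CompleteSpace E] {α : ℝ} (hα : 0 < α) (v : E) :
    √(α / Real.pi) • ∫ t : ℝ, Real.exp (-(α * t ^ 2)) • NormedSpace.exp ((I * t) • H) v =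
      ∑ i, (Real.exp (-(μ i ^ 2 / (4 * α))) * ⟪b i, v⟫_ℂ) • b i := by
  have hterm (t : ℝ) : Real.exp (-(α * t ^ 2)) • NormedSpace.exp ((I * t) • H) v =
      ∑ i, (((Real.exp (-(α * t ^ 2)) : ℂ) * cexp (I * t * μ i)) * ⟪b i, v⟫_ℂ) • b i := by
    simp only [b.exp_smul_apply_of_apply_eq_smul hb, Finset.smul_sum, smul_smul,
      ← Complex.coe_smul, mul_assoc]
  have hint (i : ι) :
      Integrable fun t : ℝ => (Real.exp (-(α * t ^ 2)) : ℂ) * cexp (I * t * μ i) := by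
    refine (Integrable.ofReal (f := fun t : ℝ => Real.exp (-(α * t ^ 2))) ?_).mul_bdd (c := 1)
      (Continuous.aestronglyMeasurable (by fun_prop)) (.of_forall fun t => ?_)
    · simpa only [neg_mul] using integrable_exp_neg_mul_sq hα
    · rw [mul_assoc, ← ofReal_mul, norm_exp_I_mul_ofReal]
  simp_rw [hterm]
  rw [integral_finsetSum _ fun i _ => ((hint i).mul_const _).smul_const _, Finset.smul_sum]
  refine Finset.sum_congr rfl fun i _ => ?_
  rw [integral_smul_const, integral_mul_const, ← Complex.coe_smul, smul_smul, ← mul_assoc,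
    sqrt_div_pi_mul_integral_gaussian_mul_cexp hα]

variable {γ : ℝ} (hγ : 0 ≤ γ) {v : E} (hv : ∀ i, ⟪b i, v⟫_ℂ ≠ 0 → γ ≤ μ i)
include hγ hv

lemma mul_norm_le_norm_apply : γ * ‖v‖ ≤ ‖H v‖ := by
  rw [b.apply_eq_sum_of_apply_eq_smul hb]
  refine b.le_norm_sum_mul_inner_smul hγ fun i hi => ?_
  rw [Complex.norm_real, Real.norm_eq_abs]
  exact (hv i hi).trans (le_abs_self _)

lemma norm_gaussian_average_exp_apply_le [CompleteSpace E] {α : ℝ} (hα : 0 < α) :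
    ‖√(α / Real.pi) • ∫ t : ℝ, Real.exp (-(α * t ^ 2)) • NormedSpace.exp ((I * t) • H) v‖ ≤
      Real.exp (-(γ ^ 2 / (4 * α))) * ‖v‖ := by
  rw [b.gaussian_average_exp_apply hb hα]
  refine b.norm_sum_mul_inner_smul_le (Real.exp_pos _).le fun i hi => ?_
  rw [Complex.norm_real, Real.norm_of_nonneg (Real.exp_pos _).le, Real.exp_le_exp, neg_le_neg_iff]
  have := hv i hi
  gcongr

end OrthonormalBasis

lemma integral_gaussian_smul_conj_exp_apply_of_apply_eq_zero {E : Type*} [NormedAddCommGroup E]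
    [InnerProductSpace ℂ E] [CompleteSpace E] {H : E →L[ℂ] E} (hH : IsSelfAdjoint H)
    (A : E →L[ℂ] E) {α : ℝ} (hα : 0 < α) {ψ : E} (hψ : H ψ = 0) :
    (∫ t : ℝ, Real.exp (-(α * t ^ 2)) •
        (NormedSpace.exp ((I * t) • H) * A * NormedSpace.exp ((-(I * t)) • H))) ψ =
      ∫ t : ℝ, Real.exp (-(α * t ^ 2)) • NormedSpace.exp ((I * t) • H) (A ψ) := by
  rw [ContinuousLinearMap.integral_apply (integrable_gaussian_smul_conj_exp hH A hα)]
  congr 1 with t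
  have hfix : NormedSpace.exp ((-(I * t)) • H) ψ = ψ := by
    simpa using NormedSpace.exp_apply_of_apply_eq_smul (c := 0) (by simp [hψ])
  simp only [smul_apply, mul_apply_eq_comp, hfix]

theorem stmt_2_general {E : Type*} [NormedAddCommGroup E] [InnerProductSpace ℂ E]
    [FiniteDimensional ℂ E] (H A : E →L[ℂ] E) (hH : IsSelfAdjoint H)
    (ψ₀ : E) (hψ : ‖ψ₀‖ = 1) (hgs : H ψ₀ = 0)
    (hker : ∀ v : E, H v = 0 → ∃ c : ℂ, v = c • ψ₀)
    (γ : ℝ) (hγ : 0 < γ)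
    (hgap : ∀ μ : ℝ, Module.End.HasEigenvalue (H : E →ₗ[ℂ] E) (μ : ℂ) → μ = 0 ∨ γ ≤ μ)
    (hexp : ⟪ψ₀, A ψ₀⟫_ℂ = 0)
    (α : ℝ) (hα : 0 < α) :
    ‖(Real.sqrt (α / Real.pi) •
        ∫ t : ℝ, Real.exp (-(α * t ^ 2)) •
          (NormedSpace.exp ((Complex.I * t) • H) * A *
            NormedSpace.exp ((-(Complex.I * t)) • H))) ψ₀‖
      ≤ ‖H * A - A * H‖ * γ⁻¹ * Real.exp (-(γ ^ 2 / (4 * α))) := by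
  have hT := hH.isSymmetric
  let b := hT.eigenvectorBasis rfl
  have hb : ∀ i, H (b i) = (hT.eigenvalues rfl i : ℂ) • b i := hT.apply_eigenvectorBasis rfl
  have hAψ₀ : ∀ i, ⟪b i, A ψ₀⟫_ℂ ≠ 0 → γ ≤ hT.eigenvalues rfl i := by
    intro i hi
    refine (hgap _ (hT.hasEigenvalue_eigenvalues rfl i)).resolve_left fun h0 => hi ?_
    obtain ⟨c, hc⟩ := hker (b i) (by rw [hb, show hT.eigenvalues rfl i = 0 from h0]; simp)
    rw [hc, inner_smul_left, hexp, mul_zero]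
  have hcomm : γ * ‖A ψ₀‖ ≤ ‖H * A - A * H‖ := calc
    γ * ‖A ψ₀‖ ≤ ‖H (A ψ₀)‖ := b.mul_norm_le_norm_apply hb hγ.le hAψ₀
    _ = ‖(H * A - A * H) ψ₀‖ := by simp [mul_apply_eq_comp, hgs]
    _ ≤ ‖H * A - A * H‖ := by simpa [hψ] using (H * A - A * H).le_opNorm ψ₀
  rw [smul_apply, integral_gaussian_smul_conj_exp_apply_of_apply_eq_zero hH A hα hgs]
  calc _ ≤ Real.exp (-(γ ^ 2 / (4 * α))) * ‖A ψ₀‖ :=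
        b.norm_gaussian_average_exp_apply_le hb hγ.le hAψ₀ hα
    _ ≤ Real.exp (-(γ ^ 2 / (4 * α))) * (‖H * A - A * H‖ * γ⁻¹) := by
        gcongr
        rwa [le_mul_inv_iff₀ hγ, mul_comm]
    _ = _ := by ring

theorem stmt_2 {E : Type*} [NormedAddCommGroup E] [InnerProductSpace ℂ E]
    [FiniteDimensional ℂ E] (H A : E →L[ℂ] E) (hH : IsSelfAdjoint H)
    (hA : IsSelfAdjoint A)
    (hpos : ∀ v : E, 0 ≤ (⟪v, H v⟫_ℂ).re)
    (ψ₀ : E) (hψ : ‖ψ₀‖ = 1) (hgs : H ψ₀ = 0)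
    (hker : ∀ v : E, H v = 0 → ∃ c : ℂ, v = c • ψ₀)
    (γ : ℝ) (hγ : 0 < γ)
    (hgap : ∀ μ : ℝ, Module.End.HasEigenvalue (H : E →ₗ[ℂ] E) (μ : ℂ) → μ = 0 ∨ γ ≤ μ)
    (hexp : ⟪ψ₀, A ψ₀⟫_ℂ = 0)
    (α : ℝ) (hα : 0 < α) :
    ‖(Real.sqrt (α / Real.pi) •
        ∫ t : ℝ, Real.exp (-(α * t ^ 2)) •
          (NormedSpace.exp ((Complex.I * t) • H) * A *
            NormedSpace.exp ((-(Complex.I * t)) • H))) ψ₀‖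
      ≤ ‖H * A - A * H‖ * γ⁻¹ * Real.exp (-(γ ^ 2 / (4 * α))) :=
  stmt_2_general H A hH ψ₀ hψ hgs hker γ hγ hgap hexp α hα
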